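/- For all nonnegative integers a, b, n with a + b ≤ n, the quantity Σ(n,a,b) := ∑_{j=1}^{b} (κ_{j+a−1} + κ_{n−j−a}) · (b − 1 + κ_{j−1} + κ_{b−j} − κ_b) is nonnegative: Σ(n,a,b) ≥ 0. -/

import Mathlib

open Finset Filter Topology

/-- The `n`-th harmonic number `H_n = ∑_{i=1}^n 1/i`. -/
noncomputable def H (n : ℕ) : ℝ := ∑ i ∈ Finset.range n, (1 : ℝ) / (i + 1)

/-- `κ_n = 2(n+1)H_n - 4n`, the mean number of key comparisons for QuickSort on `n` keys. -/
noncomputable def κ (n : ℕ) : ℝ := 2 * (n + 1) * H n - 4 * n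

/-!
Write `Σ(n,a,b) = ∑ q_j g_j` with `q_j = κ_{j+a-1} + κ_{n-j-a}` and
`g_j = b - 1 + κ_{j-1} + κ_{b-j} - κ_b`. By the QuickSort recurrence the `g_j` sum to zero, and
`g` is symmetric under `j ↦ b + 1 - j`, so `Σ` is unchanged when `q_j` is replaced by
`q_j + q_{b+1-j}`. Since `κ` is a convex sequence, both `g_j` and `q_j + q_{b+1-j}` grow with the
distance `|2j - (b+1)|` of `j` from the centre; Chebyshev's sum inequality then gives
`2b · Σ ≥ (∑_j (q_j + q_{b+1-j})) · ∑_j g_j = 0`.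
-/

section ConvexSequence

variable {f : ℕ → ℝ}

theorem add_le_add_of_monotone_sub_of_le (hf : Monotone fun n => f (n + 1) - f n)
    (d : ℕ) {s t : ℕ} (hst : s ≤ t) : f (s + d) + f t ≤ f s + f (t + d) := by
  induction d with
  | zero => simp
  | succ d ih =>
    have := hf (show s + d ≤ t + d by omega)
    simp only at this
    rw [← add_assoc, ← add_assoc]
    linarith

theorem add_le_add_of_monotone_sub_of_abs_le (hf : Monotone fun n => f (n + 1) - f n)
    {p q p' q' : ℕ} (hsum : p + q = p' + q') (hspread : |(p : ℤ) - q| ≤ |(p' : ℤ) - q'|) :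
    f p + f q ≤ f p' + f q' := by
  wlog hpq : p ≤ q generalizing p q
  · rw [add_comm (f p)]
    exact this (by omega) (by rwa [abs_sub_comm]) (by omega)
  wlog hpq' : p' ≤ q' generalizing p' q'
  · rw [add_comm (f p')]
    exact this (by omega) (by rwa [abs_sub_comm (q' : ℤ)]) (by omega)
  rw [abs_of_nonpos (by omega), abs_of_nonpos (by omega)] at hspread
  obtain ⟨d, rfl⟩ : ∃ d, p = p' + d := ⟨p - p', by omega⟩
  obtain rfl : q' = q + d := by omega
  exact add_le_add_of_monotone_sub_of_le hf d (by omega)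

end ConvexSequence

theorem H_succ (n : ℕ) : H (n + 1) = H n + 1 / ((n : ℝ) + 1) := by
  simp [H, Finset.sum_range_succ]

theorem H_monotone : Monotone H := fun m n hmn =>
  Finset.sum_le_sum_of_subset_of_nonneg (by simpa using hmn) fun _ _ _ => by positivity

theorem κ_succ (n : ℕ) : κ (n + 1) = κ n + 2 * H (n + 1) - 2 := by
  have : ((n : ℝ) + 1) ≠ 0 := by positivity
  simp only [κ, H_succ]
  push_cast
  field_simp
  ring

theorem κ_succ_sub_monotone : Monotone fun n => κ (n + 1) - κ n := fun m n hmn => by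
  simp only [κ_succ]
  linarith [H_monotone (Nat.succ_le_succ hmn)]

theorem two_mul_sum_range_κ (b : ℕ) :
    2 * ∑ k ∈ range b, κ k = b * κ b - b * ((b : ℝ) - 1) := by
  induction b with
  | zero => simp
  | succ b ih =>
    have : ((b : ℝ) + 1) ≠ 0 := by positivity
    rw [sum_range_succ, mul_add, ih, κ_succ, H_succ]
    simp only [κ]
    push_cast
    field_simp
    ring

/-- The deviation from `κ_b` of the cost of sorting `b` keys when the pivot has rank `j`. -/
noncomputable def pivotDeviation (b j : ℕ) : ℝ := (b : ℝ) - 1 + κ (j - 1) + κ (b - j) - κ b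

noncomputable def kappaPair (a n j : ℕ) : ℝ := κ (j + a - 1) + κ (n - j - a)

theorem sum_Icc_reflect (b : ℕ) (f : ℕ → ℝ) :
    ∑ j ∈ Icc 1 b, f (b + 1 - j) = ∑ j ∈ Icc 1 b, f j :=
  sum_nbij' (fun j => b + 1 - j) (fun j => b + 1 - j) (by simp; omega) (by simp; omega)
    (by simp; omega) (by simp; omega) fun _ _ => rfl

theorem sum_pivotDeviation (b : ℕ) : ∑ j ∈ Icc 1 b, pivotDeviation b j = 0 := by
  have hκ : ∑ j ∈ Icc 1 b, κ (j - 1) = ∑ k ∈ range b, κ k := by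
    rw [← Ico_add_one_right_eq_Icc, sum_Ico_eq_sum_range]
    simp [add_comm 1]
  have hκ' : ∑ j ∈ Icc 1 b, κ (b - j) = ∑ k ∈ range b, κ k := by
    rw [← sum_Icc_reflect, ← hκ]
    exact sum_congr rfl fun j hj => by rw [mem_Icc] at hj; congr 1; omega
  simp only [pivotDeviation, sum_add_distrib, sum_sub_distrib, hκ, hκ', sum_const,
    Nat.card_Icc, Nat.add_sub_cancel, nsmul_eq_mul]
  linarith [two_mul_sum_range_κ b]

theorem pivotDeviation_reflect {b j : ℕ} (hj : j ≤ b + 1) :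
    pivotDeviation b (b + 1 - j) = pivotDeviation b j := by
  simp only [pivotDeviation]
  rw [show b + 1 - j - 1 = b - j by omega, show b - (b + 1 - j) = j - 1 by omega]
  ring

theorem pivotDeviation_le_of_abs_le {b i j : ℕ} (hi : i ∈ Icc 1 b) (hj : j ∈ Icc 1 b)
    (hij : |2 * (i : ℤ) - (b + 1)| ≤ |2 * (j : ℤ) - (b + 1)|) :
    pivotDeviation b i ≤ pivotDeviation b j := by
  rw [mem_Icc] at hi hj
  have hi' : ((i - 1 : ℕ) : ℤ) - (b - i : ℕ) = 2 * i - (b + 1) := by omega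
  have hj' : ((j - 1 : ℕ) : ℤ) - (b - j : ℕ) = 2 * j - (b + 1) := by omega
  have := add_le_add_of_monotone_sub_of_abs_le κ_succ_sub_monotone
    (p := i - 1) (q := b - i) (p' := j - 1) (q' := b - j) (by omega) (by rwa [hi', hj'])
  simp only [pivotDeviation]
  linarith

theorem kappaPair_add_reflect_le_of_abs_le {a b n i j : ℕ} (hn : a + b ≤ n)
    (hi : i ∈ Icc 1 b) (hj : j ∈ Icc 1 b)
    (hij : |2 * (i : ℤ) - (b + 1)| ≤ |2 * (j : ℤ) - (b + 1)|) :
    kappaPair a n i + kappaPair a n (b + 1 - i) ≤ kappaPair a n j + kappaPair a n (b + 1 - j) := by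
  rw [mem_Icc] at hi hj
  have hlow : ∀ k, 1 ≤ k → k ≤ b →
      ((k + a - 1 : ℕ) : ℤ) - (b + 1 - k + a - 1 : ℕ) = 2 * k - (b + 1) := by
    intro k _ _; omega
  have hhigh : ∀ k, 1 ≤ k → k ≤ b →
      ((n - k - a : ℕ) : ℤ) - (n - (b + 1 - k) - a : ℕ) = -(2 * k - (b + 1)) := by
    intro k _ _; omega
  have hA := add_le_add_of_monotone_sub_of_abs_le κ_succ_sub_monotone
    (p := i + a - 1) (q := b + 1 - i + a - 1) (p' := j + a - 1) (q' := b + 1 - j + a - 1)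
    (by omega) (by rwa [hlow i hi.1 hi.2, hlow j hj.1 hj.2])
  have hB := add_le_add_of_monotone_sub_of_abs_le κ_succ_sub_monotone
    (p := n - i - a) (q := n - (b + 1 - i) - a) (p' := n - j - a) (q' := n - (b + 1 - j) - a)
    (by omega) (by rwa [hhigh i hi.1 hi.2, hhigh j hj.1 hj.2, abs_neg, abs_neg])
  simp only [kappaPair]
  linarith

theorem monovaryOn_of_le_imp_le {ι α β γ : Type*} [Preorder α] [Preorder β] [LinearOrder γ]
    {f : ι → α} {g : ι → β} {s : Set ι} (d : ι → γ)
    (hf : ∀ i ∈ s, ∀ j ∈ s, d i ≤ d j → f i ≤ f j)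
    (hg : ∀ i ∈ s, ∀ j ∈ s, d i ≤ d j → g i ≤ g j) : MonovaryOn f g s :=
  fun i hi j hj hgij =>
    hf i hi j hj (le_of_not_ge fun hdji => (hg j hj i hi hdji).not_gt hgij)

theorem MonovaryOn.sum_mul_nonneg_of_sum_eq_zero {ι α : Type*} [Semiring α] [LinearOrder α]
    [IsStrictOrderedRing α] [ExistsAddOfLE α] {s : Finset ι} {f g : ι → α}
    (hfg : MonovaryOn f g s) (hg : ∑ i ∈ s, g i = 0) : 0 ≤ ∑ i ∈ s, f i * g i := by
  rcases s.eq_empty_or_nonempty with rfl | hs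
  · simp
  have := hfg.sum_mul_sum_le_card_mul_sum
  rw [hg, mul_zero] at this
  exact nonneg_of_mul_nonneg_right this (by exact_mod_cast hs.card_pos)

theorem sigma_nonneg (a b n : ℕ) (h : a + b ≤ n) :
    0 ≤ ∑ j ∈ Finset.Icc 1 b,
      (κ (j + a - 1) + κ (n - j - a)) *
        ((b : ℝ) - 1 + κ (j - 1) + κ (b - j) - κ b) := by
  change 0 ≤ ∑ j ∈ Icc 1 b, kappaPair a n j * pivotDeviation b j
  have hreflect : ∑ j ∈ Icc 1 b, kappaPair a n (b + 1 - j) * pivotDeviation b j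
      = ∑ j ∈ Icc 1 b, kappaPair a n j * pivotDeviation b j :=
    calc _ = ∑ j ∈ Icc 1 b, kappaPair a n (b + 1 - j) * pivotDeviation b (b + 1 - j) :=
          sum_congr rfl fun j hj => by
            rw [pivotDeviation_reflect (by rw [mem_Icc] at hj; omega)]
      _ = _ := sum_Icc_reflect b fun j => kappaPair a n j * pivotDeviation b j
  have hmonovary : MonovaryOn (fun j => kappaPair a n j + kappaPair a n (b + 1 - j))
      (pivotDeviation b) (Icc 1 b : Set ℕ) :=
    monovaryOn_of_le_imp_le (fun j : ℕ => |2 * (j : ℤ) - (b + 1)|)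
      (fun _ hi _ hj => kappaPair_add_reflect_le_of_abs_le h hi hj)
      (fun _ hi _ hj => pivotDeviation_le_of_abs_le hi hj)
  have := hmonovary.sum_mul_nonneg_of_sum_eq_zero (sum_pivotDeviation b)
  simp only [add_mul, sum_add_distrib, hreflect] at this
  linarith
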